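/- For an ideal hyperbolic 3-simplex with dihedral angles α, β, γ ≥ 0 satisfying α + β + γ = π, the volume L(α) + L(β) + L(γ) is at most 3·L(π/3) = v₃, with equality if and only if α = β = γ = π/3. -/
import Mathlib

open Real
noncomputable section

/-- The Lobachevsky function `L(θ) = -∫₀^θ log |2 sin u| du`. -/
def lobachevsky (θ : ℝ) : ℝ := -∫ u in (0:ℝ)..θ, log |2 * sin u|

section Aux
open MeasureTheory intervalIntegral Set

/-- integrand -/
def lg (u : ℝ) : ℝ := log |2 * sin u|

lemma lg_measurable : Measurable lg :=
  Real.measurable_log.comp ((measurable_const.mul Real.measurable_sin).abs)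

lemma lg_symm (u : ℝ) : lg (π - u) = lg u := by
  simp [lg, Real.sin_pi_sub]

/-- |log u| ≤ 2 * u^(-1/2) + 2 on (0, π/2] roughly; we prove −log u ≤ 2u^{-1/2} on (0,1]. -/
lemma neg_log_le (u : ℝ) (h0 : 0 < u) (h1 : u ≤ 1) : -log u ≤ 2 * u ^ (-(1/2) : ℝ) := by
  have hy : (0:ℝ) < u ^ (-(1/2) : ℝ) := Real.rpow_pos_of_pos h0 _
  have := Real.log_le_sub_one_of_pos hy
  have hlog : log (u ^ (-(1/2) : ℝ)) = -(1/2) * log u := Real.log_rpow h0 _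
  nlinarith [hy.le]

lemma lg_bound {u : ℝ} (hu : u ∈ Set.Ioc (0:ℝ) π) :
    |lg u| ≤ 6 + 2 * u ^ (-(1/2) : ℝ) + 2 * (π - u) ^ (-(1/2) : ℝ) := by
  have hπ := Real.pi_gt_three
  rcases eq_or_lt_of_le hu.2 with h | h
  · -- u = π
    have : lg u = 0 := by simp [lg, h, Real.sin_pi]
    rw [this]
    have h1 : (0:ℝ) ≤ u ^ (-(1/2):ℝ) := Real.rpow_nonneg (by linarith [hu.1]) _
    have h2 : (0:ℝ) ≤ (π - u) ^ (-(1/2):ℝ) := by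
      rw [← h, sub_self, Real.zero_rpow (by norm_num)]
    simp; nlinarith
  · -- 0 < u < π
    have hs : 0 < sin u := Real.sin_pos_of_pos_of_lt_pi hu.1 h
    have habs : |2 * sin u| = 2 * sin u := abs_of_pos (by linarith)
    have hlg : lg u = log 2 + log (sin u) := by
      rw [lg, habs, Real.log_mul (by norm_num) hs.ne']
    have key : ∀ v : ℝ, 0 < v → v ≤ π/2 → |log (sin v)| ≤ 4 + 2 * v ^ (-(1/2):ℝ) := by
      intro v hv0 hv2
      have hsv : 0 < sin v := Real.sin_pos_of_pos_of_lt_pi hv0 (by linarith)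
      have hup : sin v ≤ 1 := Real.sin_le_one v
      have hlow : 2/π * v ≤ sin v := Real.mul_le_sin hv0.le hv2
      have hlogle : log (sin v) ≤ 0 := Real.log_nonpos hsv.le hup
      rw [abs_of_nonpos hlogle]
      have h1 : log (2/π * v) ≤ log (sin v) :=
        Real.log_le_log (by positivity) hlow
      have h2 : log (2/π * v) = log (2/π) + log v :=
        Real.log_mul (by positivity) hv0.ne'
      -- -log v bound
      rcases le_total v 1 with hv1 | hv1
      · have := neg_log_le v hv0 hv1
        have h3 : -log (2/π) ≤ 1 := by
          have : log (π/2) ≤ π/2 - 1 := Real.log_le_sub_one_of_pos (by positivity)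
          have hinv : log (2/π) = - log (π/2) := by
            rw [← Real.log_inv]; norm_num
          nlinarith [Real.pi_lt_d2]
        nlinarith
      · have hlv : 0 ≤ log v := Real.log_nonneg hv1
        have h3 : -log (2/π) ≤ 1 := by
          have : log (π/2) ≤ π/2 - 1 := Real.log_le_sub_one_of_pos (by positivity)
          have hinv : log (2/π) = - log (π/2) := by
            rw [← Real.log_inv]; norm_num
          nlinarith [Real.pi_lt_d2]
        have h4 : (0:ℝ) ≤ v ^ (-(1/2):ℝ) := Real.rpow_nonneg (by linarith) _
        nlinarith
    have hlog2 : log 2 ≤ 1 := by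
      have := Real.log_le_sub_one_of_pos (x := 2) (by norm_num); linarith
    have hlog2' : (0:ℝ) ≤ log 2 := Real.log_nonneg (by norm_num)
    rcases le_total u (π/2) with hc | hc
    · have := key u hu.1 hc
      have h2 : (0:ℝ) ≤ (π - u) ^ (-(1/2):ℝ) := Real.rpow_nonneg (by linarith) _
      calc |lg u| ≤ log 2 + |log (sin u)| := by
            rw [hlg]; calc |log 2 + log (sin u)| ≤ |log 2| + |log (sin u)| := abs_add_le _ _
                 _ = log 2 + |log (sin u)| := by rw [abs_of_nonneg hlog2']
        _ ≤ 6 + 2 * u ^ (-(1/2):ℝ) + 2 * (π - u) ^ (-(1/2):ℝ) := by nlinarith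
    · have hv := key (π - u) (by linarith) (by linarith)
      rw [Real.sin_pi_sub] at hv
      have h2 : (0:ℝ) ≤ u ^ (-(1/2):ℝ) := Real.rpow_nonneg hu.1.le _
      calc |lg u| ≤ log 2 + |log (sin u)| := by
            rw [hlg]; calc |log 2 + log (sin u)| ≤ |log 2| + |log (sin u)| := abs_add_le _ _
                 _ = log 2 + |log (sin u)| := by rw [abs_of_nonneg hlog2']
        _ ≤ 6 + 2 * u ^ (-(1/2):ℝ) + 2 * (π - u) ^ (-(1/2):ℝ) := by nlinarith

lemma lg_intervalIntegrable_pi : IntervalIntegrable lg volume 0 π := by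
  have hH : IntervalIntegrable
      (fun u : ℝ => 6 + 2 * u ^ (-(1/2) : ℝ) + 2 * (π - u) ^ (-(1/2) : ℝ)) volume 0 π := by
    have h1 : IntervalIntegrable (fun u : ℝ => u ^ (-(1/2):ℝ)) volume 0 π :=
      intervalIntegral.intervalIntegrable_rpow' (by norm_num)
    have h2 : IntervalIntegrable (fun u : ℝ => (π - u) ^ (-(1/2):ℝ)) volume 0 π := by
      have := (intervalIntegral.intervalIntegrable_rpow'
        (a := 0) (b := π) (r := -(1/2)) (by norm_num)).comp_sub_left π
      simpa using this.symm
    exact (_root_.intervalIntegrable_const.add (h1.const_mul 2)).add (h2.const_mul 2)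
  refine hH.mono_fun' (lg_measurable.aestronglyMeasurable) ?_
  rw [Set.uIoc_of_le Real.pi_pos.le]
  filter_upwards [ae_restrict_mem measurableSet_Ioc] with u hu
  simpa [Real.norm_eq_abs] using lg_bound hu



lemma lg_int_sub (a b : ℝ) (ha : 0 ≤ a) (hb : b ≤ π) (hab : a ≤ b) :
    IntervalIntegrable lg volume a b :=
  lg_intervalIntegrable_pi.mono_set
    (Set.uIcc_subset_uIcc (by simp [Set.mem_uIcc]; left; exact ⟨ha, by linarith⟩)
      (by simp [Set.mem_uIcc]; left; exact ⟨by linarith, hb⟩))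

lemma int_second_half : (∫ u in (π/2)..π, lg u) = ∫ u in (0:ℝ)..(π/2), lg u := by
  have h := intervalIntegral.integral_comp_sub_left (a := (0:ℝ)) (b := π/2) lg π
  have h2 : (∫ x in (0:ℝ)..(π/2), lg (π - x)) = ∫ x in (0:ℝ)..(π/2), lg x :=
    intervalIntegral.integral_congr (fun x _ => lg_symm x)
  rw [h2, show π - π/2 = π/2 by ring, show π - (0:ℝ) = π by ring] at h
  exact h.symm

lemma int_pi_zero : (∫ u in (0:ℝ)..π, lg u) = 0 := by
  have hpi := Real.pi_pos
  set A := ∫ u in (0:ℝ)..(π/2), lg u with hA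
  have hint1 : IntervalIntegrable lg volume 0 (π/2) := lg_int_sub _ _ le_rfl (by linarith) (by linarith)
  have hint2 : IntervalIntegrable lg volume (π/2) π := lg_int_sub _ _ (by linarith) le_rfl (by linarith)
  have hsplit : (∫ u in (0:ℝ)..π, lg u) = 2 * A := by
    rw [← intervalIntegral.integral_add_adjacent_intervals hint1 hint2, int_second_half]
    ring
  -- doubling
  have hdouble : (∫ t in (0:ℝ)..(π/2), lg (2*t)) = (2:ℝ)⁻¹ * (∫ u in (0:ℝ)..π, lg u) := by
    have := intervalIntegral.integral_comp_mul_left (a := (0:ℝ)) (b := π/2) lg (c := 2) two_ne_zero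
    rw [this, show 2*(π/2) = π by ring, show 2*(0:ℝ) = 0 by ring]
    simp [smul_eq_mul]
  have hshiftint : IntervalIntegrable (fun t => lg (t + π/2)) volume 0 (π/2) := by
    have := hint2.comp_add_right (π/2)
    rw [show π/2 - π/2 = (0:ℝ) by ring, show π - π/2 = π/2 by ring] at this
    exact this
  have hae : ∀ᵐ t : ℝ ∂volume, t ∈ Set.uIoc (0:ℝ) (π/2) → lg (2*t) = lg t + lg (t + π/2) := by
    have hne : ∀ᵐ t : ℝ ∂volume, t ≠ π/2 := by
      rw [MeasureTheory.ae_iff]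
      have : {t : ℝ | ¬ t ≠ π/2} = {π/2} := by ext t; simp
      rw [this]
      exact Real.volume_singleton
    filter_upwards [hne] with t htne ht'
    rw [Set.uIoc_of_le (by positivity)] at ht'
    have ht : t ∈ Set.Ioc (0:ℝ) (π/2) := ht'
    have h1 : 0 < t := ht.1
    have h2 : t < π/2 := lt_of_le_of_ne ht.2 htne
    have hst : 0 < sin t := Real.sin_pos_of_pos_of_lt_pi h1 (by linarith)
    have hct : 0 < cos t := Real.cos_pos_of_mem_Ioo ⟨by linarith, h2⟩
    have e1 : sin (2*t) = 2 * sin t * cos t := Real.sin_two_mul t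
    have : |2 * sin (2*t)| = |2 * sin t| * |2 * cos t| := by
      rw [e1, ← abs_mul]; ring_nf
    rw [lg, lg, lg, this, Real.log_mul (by positivity) (by positivity),
      Real.sin_add_pi_div_two]
  have hcongr : (∫ t in (0:ℝ)..(π/2), lg (2*t)) = ∫ t in (0:ℝ)..(π/2), (lg t + lg (t + π/2)) :=
    intervalIntegral.integral_congr_ae hae
  have hshiftval : (∫ t in (0:ℝ)..(π/2), lg (t + π/2)) = ∫ u in (π/2)..π, lg u := by
    have := intervalIntegral.integral_comp_add_right (a := (0:ℝ)) (b := π/2) lg (π/2)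
    rw [this]; norm_num
  have hsum : (∫ t in (0:ℝ)..(π/2), (lg t + lg (t + π/2))) = A + A := by
    rw [intervalIntegral.integral_add hint1 hshiftint, hshiftval, int_second_half]
  have : (2:ℝ)⁻¹ * (2 * A) = A + A := by
    rw [← hsplit, ← hdouble, hcongr, hsum]
  linarith

lemma lob_reflect {s : ℝ} (h0 : 0 ≤ s) (h1 : s ≤ π) :
    lobachevsky (π - s) = - lobachevsky s := by
  have hint1 : IntervalIntegrable lg volume 0 (π - s) := lg_int_sub _ _ le_rfl (by linarith) (by linarith)
  have hint2 : IntervalIntegrable lg volume (π - s) π := lg_int_sub _ _ (by linarith) le_rfl (by linarith)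
  have hsplit := intervalIntegral.integral_add_adjacent_intervals hint1 hint2
  rw [int_pi_zero] at hsplit
  have h2 : (∫ x in (0:ℝ)..s, lg (π - x)) = ∫ x in (0:ℝ)..s, lg x :=
    intervalIntegral.integral_congr (fun x _ => lg_symm x)
  have h3 := intervalIntegral.integral_comp_sub_left (a := (0:ℝ)) (b := s) lg π
  rw [h2, show π - (0:ℝ) = π by ring] at h3
  unfold lobachevsky
  have : (∫ u in (0:ℝ)..(π-s), lg u) + (∫ u in (0:ℝ)..s, lg u) = 0 := by
    rw [← h3] at hsplit; simpa using hsplit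
  show -(∫ u in (0:ℝ)..(π - s), log |2 * sin u|) = -(-(∫ u in (0:ℝ)..s, log |2 * sin u|))
  have e : ∀ b : ℝ, (∫ u in (0:ℝ)..b, log |2 * sin u|) = ∫ u in (0:ℝ)..b, lg u := by
    intro b; rfl
  rw [e, e]; linarith

lemma lob_continuousOn : ContinuousOn lobachevsky (Set.Icc 0 π) := by
  have hInt : IntegrableOn lg (Set.Icc (0:ℝ) π) volume := by
    rw [integrableOn_Icc_iff_integrableOn_Ioc]
    exact (intervalIntegrable_iff_integrableOn_Ioc_of_le Real.pi_pos.le).mp lg_intervalIntegrable_pi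
  have h2 : IntegrableOn lg (Set.uIcc (0:ℝ) π) volume := by
    rwa [Set.uIcc_of_le Real.pi_pos.le]
  have h3 := (intervalIntegral.continuousOn_primitive_interval (a := (0:ℝ)) (b := π)
    (f := lg) (μ := volume) h2).neg
  rw [Set.uIcc_of_le Real.pi_pos.le] at h3
  exact h3

lemma lob_hasDerivAt {θ : ℝ} (h0 : 0 < θ) (h1 : θ < π) :
    HasDerivAt lobachevsky (- lg θ) θ := by
  have hint : IntervalIntegrable lg volume 0 θ := lg_int_sub _ _ le_rfl h1.le h0.le
  have hmeas : StronglyMeasurableAtFilter lg (nhds θ) volume :=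
    lg_measurable.stronglyMeasurable.stronglyMeasurableAtFilter
  have hcont : ContinuousAt lg θ := by
    have hs : 0 < sin θ := Real.sin_pos_of_pos_of_lt_pi h0 h1
    have hne : |2 * sin θ| ≠ 0 := by positivity
    have habs : ContinuousAt (fun u : ℝ => |2 * sin u|) θ :=
      ((continuous_const.mul Real.continuous_sin).abs).continuousAt
    exact ContinuousAt.comp (Real.continuousAt_log hne) habs
  exact (intervalIntegral.integral_hasDerivAt_right hint hmeas hcont).neg



lemma lg_strictMono : ∀ x ∈ Set.Ioo (0:ℝ) (π/2), ∀ y ∈ Set.Ioo (0:ℝ) (π/2),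
    x < y → lg x < lg y := by
  intro x hx y hy hxy
  have hpi := Real.pi_pos
  have hsx : 0 < sin x := Real.sin_pos_of_pos_of_lt_pi hx.1 (by linarith [hx.2])
  have hsy : 0 < sin y := Real.sin_pos_of_pos_of_lt_pi hy.1 (by linarith [hy.2])
  have hmono : sin x < sin y := by
    apply Real.strictMonoOn_sin ⟨by linarith [hx.1], by linarith [hx.2]⟩
      ⟨by linarith [hy.1], le_of_lt hy.2⟩ hxy
  rw [lg, lg, abs_of_pos (by linarith), abs_of_pos (by linarith)]
  exact Real.log_lt_log (by linarith) (by linarith)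

lemma lob_strictConcave : StrictConcaveOn ℝ (Set.Icc 0 (π/2)) lobachevsky := by
  have hpi := Real.pi_pos
  apply StrictAntiOn.strictConcaveOn_of_deriv (convex_Icc _ _)
    (lob_continuousOn.mono (Set.Icc_subset_Icc le_rfl (by linarith)))
  rw [interior_Icc]
  intro x hx y hy hxy
  have hdx : deriv lobachevsky x = - lg x :=
    (lob_hasDerivAt hx.1 (by linarith [hx.2])).deriv
  have hdy : deriv lobachevsky y = - lg y :=
    (lob_hasDerivAt hy.1 (by linarith [hy.2])).deriv
  rw [hdx, hdy]
  have := lg_strictMono x hx y hy hxy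
  linarith

/-- auxiliary function h(s) = 2 L(s/2) - L(s) -/
def lobH (s : ℝ) : ℝ := 2 * lobachevsky (s/2) - lobachevsky s

lemma lobH_hasDerivAt {s : ℝ} (h0 : 0 < s) (h1 : s < π) :
    HasDerivAt lobH (lg s - lg (s/2)) s := by
  have h2 : HasDerivAt (fun t : ℝ => t/2) (1/2) s := by
    simpa using (hasDerivAt_id s).div_const 2
  have h3 : HasDerivAt (fun t : ℝ => lobachevsky (t/2)) (- lg (s/2) * (1/2)) s :=
    (lob_hasDerivAt (by linarith) (by linarith)).comp s h2
  have h4 := (h3.const_mul 2).sub (lob_hasDerivAt h0 h1)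
  have : 2 * (- lg (s/2) * (1/2)) - (- lg s) = lg s - lg (s/2) := by ring
  rw [this] at h4
  exact h4

lemma lobH_deriv_pos {s : ℝ} (h0 : 0 < s) (h1 : s < 2*π/3) : 0 < lg s - lg (s/2) := by
  have hpi := Real.pi_gt_three
  have hs2 : 0 < sin (s/2) := Real.sin_pos_of_pos_of_lt_pi (by linarith) (by linarith)
  have hss : 0 < sin s := Real.sin_pos_of_pos_of_lt_pi h0 (by linarith)
  have hcos : 1/2 < cos (s/2) := by
    rw [← Real.cos_pi_div_three]
    exact Real.strictAntiOn_cos ⟨by linarith, by linarith⟩ ⟨by linarith, by linarith⟩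
      (by linarith)
  have hdouble : sin s = 2 * sin (s/2) * cos (s/2) := by
    have := Real.sin_two_mul (s/2)
    rw [show 2*(s/2) = s by ring] at this
    exact this
  have hlt : sin (s/2) < sin s := by nlinarith
  have h5 : lg (s/2) < lg s := by
    rw [lg, lg, abs_of_pos (by linarith), abs_of_pos (by linarith)]
    exact Real.log_lt_log (by linarith) (by linarith)
  linarith

lemma lobH_strictMono : StrictMonoOn lobH (Set.Icc 0 (2*π/3)) := by
  have hpi := Real.pi_gt_three
  apply strictMonoOn_of_deriv_pos (convex_Icc _ _)
  · -- continuity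
    have c1 : ContinuousOn (fun s : ℝ => lobachevsky (s/2)) (Set.Icc 0 (2*π/3)) := by
      apply lob_continuousOn.comp (Continuous.continuousOn (by continuity))
      intro x hx
      exact ⟨by simp at hx ⊢; linarith [hx.1], by simp at hx ⊢; linarith [hx.2]⟩
    exact ((c1.const_smul (2:ℝ)).sub
      (lob_continuousOn.mono (Set.Icc_subset_Icc le_rfl (by linarith))))
  · rw [interior_Icc]
    intro x hx
    rw [(lobH_hasDerivAt hx.1 (by linarith [hx.2])).deriv]
    exact lobH_deriv_pos hx.1 hx.2



lemma key {α β γ : ℝ} (hα : 0 ≤ α) (hβ : 0 ≤ β) (hαγ : α ≤ γ) (hβγ : β ≤ γ)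
    (hsum : α + β + γ = π) :
    lobachevsky α + lobachevsky β + lobachevsky γ ≤ 3 * lobachevsky (π/3) ∧
      (lobachevsky α + lobachevsky β + lobachevsky γ = 3 * lobachevsky (π/3) ↔
        α = π/3 ∧ β = π/3 ∧ γ = π/3) := by
  have hpi := Real.pi_gt_three
  have hγ3 : π/3 ≤ γ := by linarith
  set s := α + β with hs
  have hsγ : γ = π - s := by linarith
  have hs23 : s ≤ 2*π/3 := by linarith
  have hs0 : 0 ≤ s := by linarith
  have hαhalf : α ≤ π/2 := by linarith
  have hβhalf : β ≤ π/2 := by linarith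
  have hLγ : lobachevsky γ = - lobachevsky s := by
    rw [hsγ]; exact lob_reflect hs0 (by linarith)
  have hmemα : α ∈ Set.Icc (0:ℝ) (π/2) := ⟨hα, hαhalf⟩
  have hmemβ : β ∈ Set.Icc (0:ℝ) (π/2) := ⟨hβ, hβhalf⟩
  have hmid : (1/2 : ℝ) • α + (1/2 : ℝ) • β = s/2 := by
    simp only [smul_eq_mul]; rw [hs]; ring
  have strict1 : α ≠ β → lobachevsky α + lobachevsky β < 2 * lobachevsky (s/2) := by
    intro hne
    have := lob_strictConcave.2 hmemα hmemβ hne (by norm_num : (0:ℝ) < 1/2)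
      (by norm_num : (0:ℝ) < 1/2) (by norm_num)
    rw [hmid] at this
    simp only [smul_eq_mul] at this
    linarith
  have step1 : lobachevsky α + lobachevsky β ≤ 2 * lobachevsky (s/2) := by
    rcases eq_or_ne α β with h | h
    · have hsh : s/2 = β := by rw [hs, h]; ring
      rw [hsh, h]; ring_nf; exact le_rfl
    · exact (strict1 h).le
  have hmems : s ∈ Set.Icc (0:ℝ) (2*π/3) := ⟨hs0, hs23⟩
  have hmem23 : (2*π/3 : ℝ) ∈ Set.Icc (0:ℝ) (2*π/3) := ⟨by linarith, le_rfl⟩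
  have strict2 : s < 2*π/3 → lobH s < lobH (2*π/3) := fun h =>
    lobH_strictMono hmems hmem23 h
  have step2 : lobH s ≤ lobH (2*π/3) := by
    rcases eq_or_lt_of_le hs23 with h | h
    · rw [h]
    · exact (strict2 h).le
  have hH23 : lobH (2*π/3) = 3 * lobachevsky (π/3) := by
    have h1 : lobachevsky (2*π/3) = - lobachevsky (π/3) := by
      rw [show 2*π/3 = π - π/3 by ring]
      exact lob_reflect (by linarith) (by linarith)
    rw [lobH, show (2*π/3)/2 = π/3 by ring, h1]; ring
  have total : lobachevsky α + lobachevsky β + lobachevsky γ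
      = lobachevsky α + lobachevsky β - lobachevsky s := by rw [hLγ]; ring
  have hle : lobachevsky α + lobachevsky β + lobachevsky γ ≤ 3 * lobachevsky (π/3) := by
    rw [total]
    have : lobachevsky α + lobachevsky β - lobachevsky s ≤ lobH s := by
      rw [lobH]; linarith
    linarith [step2, hH23.symm ▸ step2]
  refine ⟨hle, ?_, ?_⟩
  · intro he
    have hab : α = β := by
      by_contra hne
      have h1 := strict1 hne
      have : lobachevsky α + lobachevsky β + lobachevsky γ < 3 * lobachevsky (π/3) := by
        rw [total]
        have : lobachevsky α + lobachevsky β - lobachevsky s < lobH s := by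
          rw [lobH]; linarith
        linarith [step2]
      linarith
    have hseq : s = 2*π/3 := by
      by_contra hne
      have hlt : s < 2*π/3 := lt_of_le_of_ne hs23 hne
      have h2 := strict2 hlt
      have : lobachevsky α + lobachevsky β + lobachevsky γ < 3 * lobachevsky (π/3) := by
        rw [total]
        have : lobachevsky α + lobachevsky β - lobachevsky s ≤ lobH s := by
          rw [lobH]; linarith
        linarith
      linarith
    have hα3 : α = π/3 := by rw [hs] at hseq; linarith
    have hβ3 : β = π/3 := by rw [hs] at hseq; linarith
    exact ⟨hα3, hβ3, by linarith⟩
  · rintro ⟨e1, e2, e3⟩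
    rw [e1, e2, e3]; ring

lemma mainPerm {a b c : ℝ} (ha : 0 ≤ a) (hb : 0 ≤ b) (hc : 0 ≤ c)
    (hsum : a + b + c = π) :
    lobachevsky a + lobachevsky b + lobachevsky c ≤ 3 * lobachevsky (π/3) ∧
      (lobachevsky a + lobachevsky b + lobachevsky c = 3 * lobachevsky (π/3) ↔
        a = π/3 ∧ b = π/3 ∧ c = π/3) := by
  rcases le_total a b with h1 | h1
  · rcases le_total b c with h2 | h2
    · -- c max
      exact key ha hb (h1.trans h2) h2 hsum
    · -- b max
      obtain ⟨k1, k2⟩ := key ha hc h1 h2 (by linarith)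
      refine ⟨by linarith, ?_, ?_⟩
      · intro he
        obtain ⟨e1, e2, e3⟩ := k2.mp (by linarith)
        exact ⟨e1, e3, e2⟩
      · rintro ⟨e1, e2, e3⟩
        have := k2.mpr ⟨e1, e3, e2⟩
        linarith
  · rcases le_total a c with h2 | h2
    · -- c max
      exact key ha hb h2 (h1.trans h2) hsum
    · -- a max
      obtain ⟨k1, k2⟩ := key hb hc h1 h2 (by linarith)
      refine ⟨by linarith, ?_, ?_⟩
      · intro he
        obtain ⟨e1, e2, e3⟩ := k2.mp (by linarith)
        exact ⟨e3, e1, e2⟩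
      · rintro ⟨e1, e2, e3⟩
        have := k2.mpr ⟨e2, e3, e1⟩
        linarith


end Aux

/-- For an ideal hyperbolic 3-simplex with dihedral angles
`α, β, γ ≥ 0` with `α + β + γ = π`, the volume `L(α) + L(β) + L(γ)` (Milnor's formula) is
at most `3·L(π/3) = v₃`, with equality if and only if `α = β = γ = π/3`. -/
theorem ideal_simplex_volume_le_regular (α β γ : ℝ)
    (hα : 0 ≤ α) (hβ : 0 ≤ β) (hγ : 0 ≤ γ) (hsum : α + β + γ = π) :
    lobachevsky α + lobachevsky β + lobachevsky γ ≤ 3 * lobachevsky (π / 3) ∧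
      (lobachevsky α + lobachevsky β + lobachevsky γ = 3 * lobachevsky (π / 3) ↔
        α = π / 3 ∧ β = π / 3 ∧ γ = π / 3) := by
  exact mainPerm hα hβ hγ hsum

end
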